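/- Let ν > 2 and let φ_ν(t) = ∫_{-∞}^{∞} e^{itx} f_ν(x) dx be the characteristic function of the Student's t distribution with ν degrees of freedom. Then φ_ν is twice differentiable on ℝ and satisfies the second-order ODE t · φ_ν″(t) − (ν − 1) · φ_ν′(t) − ν t · φ_ν(t) = 0 for every t ∈ ℝ. -/

import Mathlib

open MeasureTheory Real Complex

/-- Student's t density with `ν` degrees of freedom. -/
noncomputable def studentDensity (ν x : ℝ) : ℝ :=
  (Real.Gamma ((ν + 1) / 2) / (Real.sqrt (Real.pi * ν) * Real.Gamma (ν / 2))) *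
    (1 + x ^ 2 / ν) ^ (-(ν + 1) / 2)

/-- The characteristic function of the Student's t distribution. -/
noncomputable def studentCharFun (ν : ℝ) (t : ℝ) : ℂ :=
  ∫ x : ℝ, Complex.exp (Complex.I * t * x) * (studentDensity ν x : ℂ)

/-!
The density `f` satisfies the Pearson equation `(ν + x²) f' = -(ν + 1) x f`, i.e.
`((ν + x²) f)' = (1 - ν) x f`. For `ν > 2` the functions `f`, `x f` and `x² f` are
integrable, so `φ` can be differentiated twice under the integral sign:
`φ' = i ∫ e^{itx} x f` and `φ'' = -∫ e^{itx} x² f`. Integrating `((ν + x²) f)'` against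
`e^{itx}` by parts gives `(1 - ν) ∫ e^{itx} x f = -i t ∫ e^{itx} (ν + x²) f`, which is the
equation `(ν - 1) φ' = t (φ'' - ν φ)`.
-/

section FourierKernel

variable {g h h' : ℝ → ℂ}

lemma norm_cexp_I_mul_ofReal_mul_ofReal (t x : ℝ) : ‖cexp (I * t * x)‖ = 1 := by
  rw [Complex.norm_exp]
  simp

lemma MeasureTheory.Integrable.cexp_I_mul_mul (hg : Integrable g) (t : ℝ) :
    Integrable fun x : ℝ => cexp (I * t * x) * g x := by
  refine hg.bdd_mul (c := 1) (by fun_prop) (Filter.Eventually.of_forall fun x => ?_)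
  rw [norm_cexp_I_mul_ofReal_mul_ofReal]

lemma hasDerivAt_integral_cexp_I_mul_mul (hg : Integrable g)
    (hxg : Integrable fun x : ℝ => (x : ℂ) * g x) (t : ℝ) :
    HasDerivAt (fun s : ℝ => ∫ x : ℝ, cexp (I * s * x) * g x)
      (I * ∫ x : ℝ, cexp (I * t * x) * ((x : ℂ) * g x)) t := by
  have hderiv (s x : ℝ) : HasDerivAt (fun s : ℝ => cexp (I * s * x) * g x)
      (I * (cexp (I * s * x) * ((x : ℂ) * g x))) s := by
    have hlin : HasDerivAt (fun s : ℝ => I * s * x) (I * x) s := by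
      simpa using ((hasDerivAt_id (s : ℂ)).const_mul I).mul_const (x : ℂ) |>.comp_ofReal
    exact (hlin.cexp.mul_const (g x)).congr_deriv (by ring)
  rw [← integral_const_mul]
  refine (hasDerivAt_integral_of_dominated_loc_of_deriv_le
    (bound := fun x : ℝ => ‖(x : ℂ) * g x‖) Filter.univ_mem
    (Filter.Eventually.of_forall fun s => (hg.cexp_I_mul_mul s).1)
    (hg.cexp_I_mul_mul t) ((hxg.cexp_I_mul_mul t).const_mul I).1
    (Filter.Eventually.of_forall fun x s _ => ?_) hxg.norm
    (Filter.Eventually.of_forall fun (x : ℝ) s _ => hderiv s x)).2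
  rw [norm_mul, norm_mul, norm_I, norm_cexp_I_mul_ofReal_mul_ofReal, one_mul, one_mul]

lemma integral_cexp_I_mul_mul_deriv (hd : ∀ x, HasDerivAt h (h' x) x) (hh : Integrable h)
    (hh' : Integrable h') (t : ℝ) :
    ∫ x : ℝ, cexp (I * t * x) * h' x = -(I * t) * ∫ x : ℝ, cexp (I * t * x) * h x := by
  have hderiv (x : ℝ) : HasDerivAt (fun x : ℝ => cexp (I * t * x) * h x)
      (I * t * (cexp (I * t * x) * h x) + cexp (I * t * x) * h' x) x := by
    have hlin : HasDerivAt (fun x : ℝ => I * t * x) (I * t) x := by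
      simpa using ((hasDerivAt_id (x : ℂ)).const_mul (I * t)).comp_ofReal
    exact (hlin.cexp.mul (hd x)).congr_deriv (by ring)
  have hzero := integral_eq_zero_of_hasDerivAt_of_integrable hderiv
    (((hh.cexp_I_mul_mul t).const_mul _).add (hh'.cexp_I_mul_mul t)) (hh.cexp_I_mul_mul t)
  rw [integral_add ((hh.cexp_I_mul_mul t).const_mul _) (hh'.cexp_I_mul_mul t),
    integral_const_mul] at hzero
  linear_combination hzero

end FourierKernel

section StudentDensity

variable {ν : ℝ}

lemma studentDensity_eq (ν x : ℝ) :
    studentDensity ν x = studentDensity ν 0 * (1 + x ^ 2 / ν) ^ (-(ν + 1) / 2) := by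
  simp [studentDensity]

lemma studentDensity_nonneg (hν : 0 < ν) (x : ℝ) : 0 ≤ studentDensity ν x := by
  unfold studentDensity
  have := Real.Gamma_pos_of_pos (by linarith : 0 < (ν + 1) / 2)
  have := Real.Gamma_pos_of_pos (by linarith : 0 < ν / 2)
  positivity

@[fun_prop]
lemma measurable_studentDensity (ν : ℝ) : Measurable (studentDensity ν) := by
  unfold studentDensity
  fun_prop

lemma add_sq_mul_studentDensity (hν : 0 < ν) (x : ℝ) :
    (ν + x ^ 2) * studentDensity ν x =
      ν * studentDensity ν 0 * (1 + x ^ 2 / ν) ^ (-(ν - 1) / 2) := by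
  have hbase : 0 < 1 + x ^ 2 / ν := by positivity
  rw [studentDensity_eq ν x, show -(ν - 1) / 2 = 1 + -(ν + 1) / 2 by ring, Real.rpow_add hbase,
    Real.rpow_one]
  field_simp

lemma hasDerivAt_add_sq_mul_studentDensity (hν : 0 < ν) (x : ℝ) :
    HasDerivAt (fun x => (ν + x ^ 2) * studentDensity ν x)
      ((1 - ν) * x * studentDensity ν x) x := by
  have hbase : 0 < 1 + x ^ 2 / ν := by positivity
  have hu : HasDerivAt (fun x : ℝ => 1 + x ^ 2 / ν) (2 * x / ν) x := by
    simpa using ((hasDerivAt_pow 2 x).div_const ν).const_add 1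
  simp_rw [add_sq_mul_studentDensity hν]
  refine ((hu.rpow_const (Or.inl hbase.ne')).const_mul (ν * studentDensity ν 0)).congr_deriv ?_
  rw [studentDensity_eq ν x, show -(ν - 1) / 2 - 1 = -(ν + 1) / 2 by ring]
  generalize (1 + x ^ 2 / ν) ^ (-(ν + 1) / 2) = u
  field_simp
  ring

lemma integrable_one_add_sq_div_rpow_neg {r : ℝ} (hr : 1 < r) (hν : 0 < ν) :
    Integrable fun x : ℝ => (1 + x ^ 2 / ν) ^ (-r / 2) := by
  have hsqrt : Real.sqrt ν ≠ 0 := (Real.sqrt_pos.2 hν).ne'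
  refine ((integrable_rpow_neg_one_add_norm_sq (E := ℝ) (by simpa using hr)).comp_div
    hsqrt).congr (Filter.Eventually.of_forall fun x => ?_)
  simp [div_pow, Real.sq_sqrt hν.le]

lemma integrable_add_sq_mul_studentDensity (hν : 2 < ν) :
    Integrable fun x : ℝ => (ν + x ^ 2) * studentDensity ν x := by
  simp_rw [add_sq_mul_studentDensity (by linarith : 0 < ν)]
  exact (integrable_one_add_sq_div_rpow_neg (by linarith) (by linarith)).const_mul _

lemma integrable_ofReal_pow_mul_studentDensity (hν : 2 < ν) {k : ℕ} (hk : k ≤ 2) :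
    Integrable fun x : ℝ => (x : ℂ) ^ k * studentDensity ν x := by
  have hf := studentDensity_nonneg (by linarith : 0 < ν)
  refine (integrable_add_sq_mul_studentDensity hν).mono' (by fun_prop)
    (Filter.Eventually.of_forall fun x => ?_)
  have hpow : |x| ^ k ≤ ν + x ^ 2 := by
    interval_cases k <;> nlinarith [sq_abs x, abs_nonneg x, sq_nonneg (|x| - 1)]
  rw [norm_mul, norm_pow, norm_real, norm_real, Real.norm_eq_abs, Real.norm_of_nonneg (hf x)]
  exact mul_le_mul_of_nonneg_right hpow (hf x)

end StudentDensity

section StudentCharFun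

variable {ν : ℝ}

lemma hasDerivAt_studentCharFun (hν : 2 < ν) (t : ℝ) :
    HasDerivAt (studentCharFun ν)
      (I * ∫ x : ℝ, cexp (I * t * x) * (x * studentDensity ν x)) t :=
  hasDerivAt_integral_cexp_I_mul_mul
    (by simpa using integrable_ofReal_pow_mul_studentDensity hν (k := 0) (by norm_num))
    (by simpa using integrable_ofReal_pow_mul_studentDensity hν (k := 1) (by norm_num)) t

lemma hasDerivAt_deriv_studentCharFun (hν : 2 < ν) (t : ℝ) :
    HasDerivAt (deriv (studentCharFun ν))
      (-∫ x : ℝ, cexp (I * t * x) * (x ^ 2 * studentDensity ν x)) t := by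
  rw [funext fun t => (hasDerivAt_studentCharFun hν t).deriv]
  refine ((hasDerivAt_integral_cexp_I_mul_mul
    (by simpa using integrable_ofReal_pow_mul_studentDensity hν (k := 1) (by norm_num))
    (by simpa [← mul_assoc, sq] using integrable_ofReal_pow_mul_studentDensity hν le_rfl)
    t).const_mul I).congr_deriv ?_
  rw [← mul_assoc, I_mul_I, neg_one_mul]
  congr 2 with x
  ring

lemma studentCharFun_pearson (hν : 2 < ν) (t : ℝ) :
    (ν - 1) * (I * ∫ x : ℝ, cexp (I * t * x) * (x * studentDensity ν x)) =
      -t * (ν * studentCharFun ν t +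
        ∫ x : ℝ, cexp (I * t * x) * (x ^ 2 * studentDensity ν x)) := by
  set f : ℝ → ℂ := fun x => studentDensity ν x
  set M₁ := ∫ x : ℝ, cexp (I * t * x) * (x * f x)
  set M₂ := ∫ x : ℝ, cexp (I * t * x) * (x ^ 2 * f x)
  have h0 : Integrable f := by
    simpa using integrable_ofReal_pow_mul_studentDensity hν (k := 0) (by norm_num)
  have h1 : Integrable fun x : ℝ => (x : ℂ) * f x := by
    simpa using integrable_ofReal_pow_mul_studentDensity hν (k := 1) (by norm_num)
  have h2 : Integrable fun x : ℝ => (x : ℂ) ^ 2 * f x :=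
    integrable_ofReal_pow_mul_studentDensity hν le_rfl
  have hd (x : ℝ) :
      HasDerivAt (fun x : ℝ => ν * f x + x ^ 2 * f x) ((1 - ν) * (x * f x)) x := by
    convert (hasDerivAt_add_sq_mul_studentDensity (by linarith) x).ofReal_comp using 1
    · ext y; push_cast; ring
    · push_cast; ring
  have hibp := integral_cexp_I_mul_mul_deriv hd ((h0.const_mul ν).add h2) (h1.const_mul _) t
  have hlhs : ∫ x : ℝ, cexp (I * t * x) * ((1 - ν) * (x * f x)) = (1 - ν) * M₁ := by
    rw [← integral_const_mul]; congr 1 with x; ring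
  have hrhs : ∫ x : ℝ, cexp (I * t * x) * (ν * f x + x ^ 2 * f x) =
      ν * studentCharFun ν t + M₂ := by
    rw [studentCharFun, ← integral_const_mul,
      ← integral_add ((h0.cexp_I_mul_mul t).const_mul _) (h2.cexp_I_mul_mul t)]
    congr 1 with x; ring
  rw [hlhs, hrhs] at hibp
  linear_combination -I * hibp + t * (ν * studentCharFun ν t + M₂) * I_mul_I

end StudentCharFun

theorem studentCharFun_ode (ν : ℝ) (hν : 2 < ν) :
    Differentiable ℝ (studentCharFun ν) ∧
    Differentiable ℝ (deriv (studentCharFun ν)) ∧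
    ∀ t : ℝ, (t : ℂ) * deriv (deriv (studentCharFun ν)) t -
      (ν - 1) * deriv (studentCharFun ν) t - ν * t * studentCharFun ν t = 0 := by
  refine ⟨fun t => (hasDerivAt_studentCharFun hν t).differentiableAt,
    fun t => (hasDerivAt_deriv_studentCharFun hν t).differentiableAt, fun t => ?_⟩
  rw [(hasDerivAt_deriv_studentCharFun hν t).deriv, (hasDerivAt_studentCharFun hν t).deriv]
  linear_combination -studentCharFun_pearson hν t
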